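/- For every i ∈ {1,…,n−1}, one has Θ(x_i^ℓ) = y_i^ℓ − τ_i^ℓ y_{i+1}^{−ℓ} in ℂ[y₁^±,…,y_n^±]#_αG. -/

import Mathlib

/-!
Common setup for the twisted graded Hecke algebra associated to the homocyclic
group `G ≅ (ℤ/ℓℤ)^{n-1}` (Gan–Highfield, "Center of twisted graded Hecke
algebras for homocyclic groups").

All indices are 0-based: the paper's `x_i, g_i, t_i, τ_i` (for `i = 1, …, n`)
correspond to index `i - 1 : Fin n` here; subscripts are taken mod `n` via the
(wrap-around) addition of `Fin n`.
-/

noncomputable section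

namespace TGHA

/-- `ζ` raised to an exponent in `ZMod ℓ` (representative taken in `{0, …, ℓ-1}`). -/
def zp (ℓ : ℕ) (ζ : ℂ) (z : ZMod ℓ) : ℂ := ζ ^ z.val

/-- Given the vector `a` of diagonal exponents of a group element
`g = diag(ζ^{a 0}, …, ζ^{a (n-1)})`, `pS n ℓ a k` is the exponent `i_k` of `g_k` when
`g` is written as `g₁^{i₁} ⋯ g_{n-1}^{i_{n-1}}`, namely the partial sum `a 0 + ⋯ + a (k-1)`. -/
def pS (n ℓ : ℕ) [NeZero n] (a : Fin n → ZMod ℓ) (k : ℕ) : ZMod ℓ :=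
  ∑ m ∈ Finset.range k, a (Fin.ofNat n m)

/-- The 2-cocycle `α : G × G → ℂˣ`,
`α(g₁^{i₁}⋯g_{n-1}^{i_{n-1}}, g₁^{j₁}⋯g_{n-1}^{j_{n-1}}) = ζ^{-i₁j₂ - i₂j₃ - ⋯ - i_{n-2}j_{n-1}}`,
expressed in terms of the vectors of diagonal exponents of the two group elements. -/
def coc (n ℓ : ℕ) [NeZero n] (ζ : ℂ) (a b : Fin n → ZMod ℓ) : ℂ :=
  zp ℓ ζ (-∑ k ∈ Finset.Icc 1 (n - 2), pS n ℓ a k * pS n ℓ b (k + 1))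

/-- The homocyclic group `G`: diagonal matrices `g = diag(ζ^{a 0}, …, ζ^{a (n-1)})` in
`SL_n(ℂ)` with `g^ℓ = 1`, identified with their vectors `a` of exponents; the condition
`det g = 1` is `∑ i, a i = 0`. Written additively. -/
def Gsub (n ℓ : ℕ) : AddSubgroup (Fin n → ZMod ℓ) where
  carrier := {a | ∑ i, a i = 0}
  zero_mem' := by simp
  add_mem' := by
    intro a b ha hb
    simp only [Set.mem_setOf_eq] at *
    simp [Finset.sum_add_distrib, ha, hb]
  neg_mem' := by
    intro a ha
    simp only [Set.mem_setOf_eq] at *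
    simp [ha]

abbrev G (n ℓ : ℕ) := ↥(Gsub n ℓ)

/-- The vector of diagonal exponents of the generator `g_i`
(`g_i x_i = ζ x_i`, `g_i x_{i+1} = ζ⁻¹ x_{i+1}`, `g_i x_j = x_j` otherwise). -/
def gvec (n ℓ : ℕ) [NeZero n] (i : Fin n) : Fin n → ZMod ℓ :=
  Pi.single i 1 - Pi.single (i + 1) 1

lemma gvec_mem (n ℓ : ℕ) [NeZero n] (i : Fin n) : gvec n ℓ i ∈ Gsub n ℓ := by
  show ∑ j, gvec n ℓ i j = 0
  simp [gvec, Finset.sum_sub_distrib]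

/-- The generator `g_i` as an element of `G`. -/
def gelt (n ℓ : ℕ) [NeZero n] (i : Fin n) : G n ℓ := ⟨gvec n ℓ i, gvec_mem n ℓ i⟩

/-- The defining relations of the twisted graded Hecke algebra `H`, as a quotient of the
free algebra on generators `x_i` (`Sum.inl i`) and `u_g`, `g ∈ G` (`Sum.inr g`): the
relations `u_g u_h = α(g,h) u_{gh}`, `u_1 = 1`, `u_g x_i = ζ^{a_i} x_i u_g` present the
crossed product `TV #_α G`, and the last two relations are the Hecke relations
`x_i x_{i+1} - x_{i+1} x_i = t_i g_i` and `x_i x_j = x_j x_i` for `|i - j| ∉ {1, n-1}`. -/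
inductive Rel (n ℓ : ℕ) [NeZero n] (ζ : ℂ) (t : Fin n → ℂ) :
    FreeAlgebra ℂ (Fin n ⊕ G n ℓ) → FreeAlgebra ℂ (Fin n ⊕ G n ℓ) → Prop
  | grp (g h : G n ℓ) :
      Rel n ℓ ζ t (FreeAlgebra.ι ℂ (Sum.inr g) * FreeAlgebra.ι ℂ (Sum.inr h))
        (coc n ℓ ζ g.1 h.1 • FreeAlgebra.ι ℂ (Sum.inr (g + h)))
  | one : Rel n ℓ ζ t (FreeAlgebra.ι ℂ (Sum.inr (0 : G n ℓ))) 1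
  | gx (g : G n ℓ) (i : Fin n) :
      Rel n ℓ ζ t (FreeAlgebra.ι ℂ (Sum.inr g) * FreeAlgebra.ι ℂ (Sum.inl i))
        (zp ℓ ζ (g.1 i) • (FreeAlgebra.ι ℂ (Sum.inl i) * FreeAlgebra.ι ℂ (Sum.inr g)))
  | hecke (i : Fin n) :
      Rel n ℓ ζ t
        (FreeAlgebra.ι ℂ (Sum.inl i) * FreeAlgebra.ι ℂ (Sum.inl (i + 1)) -
          FreeAlgebra.ι ℂ (Sum.inl (i + 1)) * FreeAlgebra.ι ℂ (Sum.inl i))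
        (t i • FreeAlgebra.ι ℂ (Sum.inr (gelt n ℓ i)))
  | commx (i j : Fin n) (h₁ : j ≠ i + 1) (h₂ : i ≠ j + 1) :
      Rel n ℓ ζ t (FreeAlgebra.ι ℂ (Sum.inl i) * FreeAlgebra.ι ℂ (Sum.inl j))
        (FreeAlgebra.ι ℂ (Sum.inl j) * FreeAlgebra.ι ℂ (Sum.inl i))

/-- The twisted graded Hecke algebra `H`. -/
abbrev H (n ℓ : ℕ) [NeZero n] (ζ : ℂ) (t : Fin n → ℂ) := RingQuot (Rel n ℓ ζ t)

/-- The image of `x_i` in `H`. -/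
def xx (n ℓ : ℕ) [NeZero n] (ζ : ℂ) (t : Fin n → ℂ) (i : Fin n) : H n ℓ ζ t :=
  RingQuot.mkAlgHom ℂ (Rel n ℓ ζ t) (FreeAlgebra.ι ℂ (Sum.inl i))

/-- The image of `g ∈ G` in `H`. -/
def ug (n ℓ : ℕ) [NeZero n] (ζ : ℂ) (t : Fin n → ℂ) (g : G n ℓ) : H n ℓ ζ t :=
  RingQuot.mkAlgHom ℂ (Rel n ℓ ζ t) (FreeAlgebra.ι ℂ (Sum.inr g))

/-- Index set for the basis `y^p u_g` of the crossed product `ℂ[y₁^±,…,y_n^±] #_α G`. -/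
abbrev M (n ℓ : ℕ) := (Fin n → ℤ) × G n ℓ

/-- `χ(g, p)`: the scalar by which `g = diag(ζ^{a 0}, …)` acts on the Laurent monomial `y^p`;
for `g = g_i` it is `ζ^{p_i - p_{i+1}}`. -/
def chi (n ℓ : ℕ) [NeZero n] (ζ : ℂ) (a : Fin n → ZMod ℓ) (p : Fin n → ℤ) : ℂ :=
  zp ℓ ζ (∑ j, a j * (p j : ZMod ℓ))

/-- Structure constants of the crossed product `ℂ[y₁^±,…,y_n^±] #_α G` with respect to its
basis: `(y^p u_g) (y^q u_h) = α(g,h) χ(g,q) y^{p+q} u_{gh}`. -/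
def sigma (n ℓ : ℕ) [NeZero n] (ζ : ℂ) (a b : M n ℓ) : ℂ :=
  coc n ℓ ζ a.2.1 b.2.1 * chi n ℓ ζ a.2.1 b.1

/-- The basis element `y^p u_g` (`a = (p, g)`) of the crossed product
`ℂ[y₁^±,…,y_n^±] #_α G`, realized faithfully as the operator of left multiplication by it
on the underlying vector space of the crossed product. -/
def Top (n ℓ : ℕ) [NeZero n] (ζ : ℂ) (a : M n ℓ) : Module.End ℂ (M n ℓ →₀ ℂ) :=
  Finsupp.lsum ℂ fun b => sigma n ℓ ζ a b • Finsupp.lsingle (a + b)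

/-- The algebra containing (the left regular realization of) the crossed product
`ℂ[y₁^±,…,y_n^±] #_α G`. -/
abbrev A (n ℓ : ℕ) := Module.End ℂ (M n ℓ →₀ ℂ)

/-- The element `u_g`, `g ∈ G`, of the crossed product. -/
def Uy (n ℓ : ℕ) [NeZero n] (ζ : ℂ) (g : G n ℓ) : A n ℓ := Top n ℓ ζ (0, g)

/-- The element `y_i` of the crossed product. -/
def Ygen (n ℓ : ℕ) [NeZero n] (ζ : ℂ) (i : Fin n) : A n ℓ := Top n ℓ ζ (Pi.single i 1, 0)

/-- The element `y_i⁻¹` of the crossed product. -/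
def Yinv (n ℓ : ℕ) [NeZero n] (ζ : ℂ) (i : Fin n) : A n ℓ := Top n ℓ ζ (-Pi.single i 1, 0)

/-- `τ_i = t_i/(ζ-1)` for `i = 1, …, n-1` and `τ_n = ζ t_n/(ζ - 1)`. -/
def tau (n : ℕ) (ζ : ℂ) (t : Fin n → ℂ) (i : Fin n) : ℂ :=
  if (i : ℕ) = n - 1 then ζ * t i / (ζ - 1) else t i / (ζ - 1)

/-- `τ̃_i = τ_i^ℓ` for `i = 1, …, n-1` and `τ̃_n = (-1)^{n(ℓ-1)} τ_n^ℓ`. -/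
def taut (n ℓ : ℕ) (ζ : ℂ) (t : Fin n → ℂ) (i : Fin n) : ℂ :=
  if (i : ℕ) = n - 1 then (-1) ^ (n * (ℓ - 1)) * tau n ζ t i ^ ℓ else tau n ζ t i ^ ℓ

/-- The index set `J`: subsets `{i₁ < ⋯ < i_k}` of `{1, …, n}` with
`|i_r - i_s| ∉ {1, n-1}`, i.e. containing no pair of (cyclically) adjacent indices. -/
def Jset (n : ℕ) [NeZero n] : Finset (Finset (Fin n)) :=
  Finset.univ.filter fun S => ∀ i ∈ S, ∀ j ∈ S, j ≠ i + 1

/-- The exponent vector `δ - ε_{i₁} - ⋯ - ε_{i_k}` for `S = {i₁, …, i_k} ∈ J`: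
the entry at `j` is `0` if some `ε_i`, `i ∈ S`, covers position `j` (i.e. `j ∈ S` or
`j - 1 ∈ S` cyclically) and `1` otherwise. -/
def expS (n : ℕ) [NeZero n] (S : Finset (Fin n)) (j : Fin n) : ℕ :=
  if j ∈ S ∨ j - 1 ∈ S then 0 else 1

/-- The ordered monomial `x₁^{p₁} ⋯ x_n^{p_n} ∈ H`. -/
def xpow (n ℓ : ℕ) [NeZero n] (ζ : ℂ) (t : Fin n → ℂ) (p : Fin n → ℕ) : H n ℓ ζ t :=
  ((List.finRange n).map fun j => xx n ℓ ζ t j ^ p j).prod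

/-- The product `g_{i₁} * ⋯ * g_{i_k} ∈ H` over `S = {i₁ < ⋯ < i_k}` (in increasing
order); since `u_g u_h = α(g,h) u_{gh}` holds in `H`, this is the `*`-product. -/
def gprodS (n ℓ : ℕ) [NeZero n] (ζ : ℂ) (t : Fin n → ℂ) (S : Finset (Fin n)) :
    H n ℓ ζ t :=
  ((S.sort (· ≤ ·)).map fun i => ug n ℓ ζ t (gelt n ℓ i)).prod

/-- The element `w = Σ_{{i₁<⋯<i_k} ∈ J} τ_{i₁} ⋯ τ_{i_k} x^{δ-ε_{i₁}-⋯-ε_{i_k}}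
g_{i₁} * ⋯ * g_{i_k}` of `H`. -/
def w (n ℓ : ℕ) [NeZero n] (ζ : ℂ) (t : Fin n → ℂ) : H n ℓ ζ t :=
  ∑ S ∈ Jset n, (∏ i ∈ S, tau n ζ t i) • (xpow n ℓ ζ t (expS n S) * gprodS n ℓ ζ t S)

/-- `ν_r = (-1)^r (ℓ/(ℓ-r)) C(ℓ-r, r)`. -/
def nu (ℓ r : ℕ) : ℂ := (-1) ^ r * ((ℓ : ℂ) / ((ℓ : ℂ) - (r : ℂ))) * (Nat.choose (ℓ - r) r : ℂ)

/-- The polynomial `F` in the variables `a_i = X (Sum.inl i)` and `b = X (Sum.inr ())`. -/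
def Fpoly (n ℓ : ℕ) [NeZero n] (ζ : ℂ) (t : Fin n → ℂ) : MvPolynomial (Fin n ⊕ Unit) ℂ :=
  (∑ S ∈ Jset n, (∏ i ∈ S, taut n ℓ ζ t i) •
      ∏ j : Fin n, MvPolynomial.X (Sum.inl j) ^ expS n S j) -
    ∑ r ∈ Finset.range (ℓ / 2 + 1),
      ((-1) ^ (n * r) * ζ ^ ((n - 2) * r) * nu ℓ r * (∏ i : Fin n, tau n ζ t i) ^ r) •
        MvPolynomial.X (Sum.inr ()) ^ (ℓ - 2 * r)

end TGHA

/-!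
Write `Θ(x_i) = y_i (1 - c z)` with `c = ζ t_i / (ζ - 1)` and `z = y_i⁻¹ y_{i+1}⁻¹ g_i`.
Since `g_i` acts on `y_i` by `ζ`, we have `z y_i = ζ y_i z`, so moving all factors `y_i` to the
left gives `Θ(x_i)^ℓ = y_i^ℓ ∏_{j<ℓ} (1 - c ζ^j z) = y_i^ℓ (1 - c^ℓ z^ℓ)`, the last step being
`∏_{j<ℓ} (1 - ζ^j Y) = 1 - Y^ℓ`. For `i < n` the cocycle is trivial on the powers of `g_i`, and
`g_i` fixes `y_i y_{i+1}`, so `z^ℓ = y_i^{-ℓ} y_{i+1}^{-ℓ}`; finally `c^ℓ = τ_i^ℓ` as `ζ^ℓ = 1`.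
-/

section PrimitiveRoots

open Finset Polynomial

theorem IsPrimitiveRoot.one_sub_pow_eq_prod_range {R : Type*} [CommRing R] [IsDomain R]
    {ζ : R} {ℓ : ℕ} (hζ : IsPrimitiveRoot ζ ℓ) (hℓ : 0 < ℓ) (y : R) :
    1 - y ^ ℓ = ∏ j ∈ range ℓ, (1 - ζ ^ j * y) := by
  have : NeZero ℓ := ⟨hℓ.ne'⟩
  rw [← one_pow ℓ, hζ.pow_sub_pow_eq_prod_sub_mul 1 y hℓ, one_pow]
  symm
  refine prod_nbij (ζ ^ ·) (fun j _ => ?_) (fun j hj k hk h => ?_) (fun ξ hξ => ?_)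
    (fun _ _ => rfl)
  · rw [Polynomial.mem_nthRootsFinset hℓ, ← pow_mul, mul_comm, pow_mul, hζ.pow_eq_one, one_pow]
  · exact hζ.pow_inj (mem_range.1 hj) (mem_range.1 hk) h
  · obtain ⟨j, hj, rfl⟩ := hζ.eq_pow_of_pow_eq_one ((Polynomial.mem_nthRootsFinset hℓ 1).1 hξ)
    exact ⟨j, mem_range.2 hj, rfl⟩

theorem IsPrimitiveRoot.prod_range_one_sub_C_mul_X {R : Type*} [CommRing R] [IsDomain R]
    {ζ : R} {ℓ : ℕ} (hζ : IsPrimitiveRoot ζ ℓ) (hℓ : 0 < ℓ) (c : R) :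
    ∏ j ∈ range ℓ, (1 - C (c * ζ ^ j) * X) = 1 - C (c ^ ℓ) * X ^ ℓ := by
  rw [C_pow, ← mul_pow, (hζ.map_of_injective C_injective).one_sub_pow_eq_prod_range hℓ]
  refine prod_congr rfl fun j _ => ?_
  rw [C_mul, C_pow]
  ring

end PrimitiveRoots

section QCommuting

open Finset Polynomial

variable {K R : Type*} [CommRing K] [Ring R] [Algebra K R] {a z : R} {q : K}

theorem mul_pow_of_mul_eq_smul (h : z * a = q • (a * z)) (m : ℕ) :
    z * a ^ m = q ^ m • (a ^ m * z) := by
  induction m with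
  | zero => simp
  | succ m ih =>
    rw [pow_succ, ← mul_assoc, ih, smul_mul_assoc, mul_assoc, h, mul_smul_comm, smul_smul,
      ← mul_assoc, pow_succ]

theorem mul_one_sub_smul_pow (h : z * a = q • (a * z)) (c : K) (m : ℕ) :
    (a * (1 - c • z)) ^ m = a ^ m * aeval z (∏ j ∈ range m, (1 - C (c * q ^ j) * X)) := by
  induction m with
  | zero => simp
  | succ m ih =>
    have hshift : (1 - c • z) * a ^ m = a ^ m * (1 - (c * q ^ m) • z) := by
      rw [sub_mul, one_mul, smul_mul_assoc, mul_pow_of_mul_eq_smul h, smul_smul, mul_sub,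
        mul_one, mul_smul_comm, mul_comm c]
    rw [pow_succ', ih, prod_range_succ_comm, map_mul, mul_assoc, ← mul_assoc _ (a ^ m), hshift,
      ← mul_assoc, ← mul_assoc, ← pow_succ', mul_assoc]
    simp [Algebra.smul_def]

theorem mul_one_sub_smul_pow_of_isPrimitiveRoot [IsDomain K] {ℓ : ℕ} (h : z * a = q • (a * z))
    (hq : IsPrimitiveRoot q ℓ) (hℓ : 0 < ℓ) (c : K) :
    (a * (1 - c • z)) ^ ℓ = a ^ ℓ - c ^ ℓ • (a ^ ℓ * z ^ ℓ) := by
  rw [mul_one_sub_smul_pow h, hq.prod_range_one_sub_C_mul_X hℓ, map_sub, map_one, map_mul,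
    aeval_C, aeval_X_pow, ← Algebra.smul_def, mul_sub, mul_one, mul_smul_comm]

end QCommuting

theorem Fin.sum_range_single_ofNat {R : Type*} [AddCommMonoidWithOne R] {n : ℕ} [NeZero n]
    (j : Fin n) {k : ℕ} (hk : k ≤ n) :
    ∑ m ∈ Finset.range k, (Pi.single j 1 : Fin n → R) (Fin.ofNat n m) =
      if (j : ℕ) < k then 1 else 0 := by
  have hterm : ∀ m ∈ Finset.range k,
      (Pi.single j 1 : Fin n → R) (Fin.ofNat n m) = if m = j then 1 else 0 := by
    intro m hm
    have hmn : m < n := (Finset.mem_range.1 hm).trans_le hk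
    simp [Pi.single_apply, Fin.ext_iff, Nat.mod_eq_of_lt hmn]
  simp only [Finset.sum_congr rfl hterm, Finset.sum_ite_eq', Finset.mem_range]

theorem Fin.add_one_ne_self_of_lt_sub_one {n : ℕ} [NeZero n] {i : Fin n} (hi : (i : ℕ) < n - 1) :
    i + 1 ≠ i := by
  intro h
  have := congrArg Fin.val h
  rw [Fin.val_add_one_of_lt' (by omega)] at this
  omega

namespace TGHA

section CrossedProduct

variable {n ℓ : ℕ} [NeZero n] {ζ : ℂ}

theorem zp_add [NeZero ℓ] (hz : ζ ^ ℓ = 1) (x y : ZMod ℓ) :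
    zp ℓ ζ (x + y) = zp ℓ ζ x * zp ℓ ζ y := by
  rw [zp, zp, zp, ZMod.val_add, ← pow_add, ← Nat.div_add_mod (x.val + y.val) ℓ, pow_add, pow_mul,
    hz, one_pow, one_mul, Nat.div_add_mod]

@[simp]
theorem zp_zero : zp ℓ ζ 0 = 1 := by simp [zp]

theorem zp_one (hℓ : 2 ≤ ℓ) : zp ℓ ζ 1 = ζ := by
  rw [zp, ZMod.val_one_eq_one_mod, Nat.mod_eq_of_lt hℓ, pow_one]

theorem pS_add (a b : Fin n → ZMod ℓ) (k : ℕ) :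
    pS n ℓ (a + b) k = pS n ℓ a k + pS n ℓ b k := by
  simp [pS, Finset.sum_add_distrib]

theorem pS_nsmul (m : ℕ) (a : Fin n → ZMod ℓ) (k : ℕ) :
    pS n ℓ (m • a) k = m • pS n ℓ a k := by
  simp [pS, Finset.smul_sum]

@[simp]
theorem coc_zero_left (b : Fin n → ZMod ℓ) : coc n ℓ ζ 0 b = 1 := by
  simp [coc, pS]

@[simp]
theorem coc_zero_right (a : Fin n → ZMod ℓ) : coc n ℓ ζ a 0 = 1 := by
  simp [coc, pS]

def sigmaExp (n ℓ : ℕ) [NeZero n] (a b : M n ℓ) : ZMod ℓ :=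
  -(∑ k ∈ Finset.Icc 1 (n - 2), pS n ℓ a.2.1 k * pS n ℓ b.2.1 (k + 1)) +
    ∑ j, a.2.1 j * (b.1 j : ZMod ℓ)

theorem sigma_eq_zp_sigmaExp [NeZero ℓ] (hz : ζ ^ ℓ = 1) (a b : M n ℓ) :
    sigma n ℓ ζ a b = zp ℓ ζ (sigmaExp n ℓ a b) :=
  (zp_add hz _ _).symm

theorem sigmaExp_cocycle (a b c : M n ℓ) :
    sigmaExp n ℓ b c + sigmaExp n ℓ a (b + c) = sigmaExp n ℓ a b + sigmaExp n ℓ (a + b) c := by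
  simp only [sigmaExp, Prod.fst_add, Prod.snd_add, AddSubgroup.coe_add, pS_add, Pi.add_apply,
    Int.cast_add, add_mul, mul_add, Finset.sum_add_distrib]
  ring

theorem sigma_cocycle [NeZero ℓ] (hz : ζ ^ ℓ = 1) (a b c : M n ℓ) :
    sigma n ℓ ζ b c * sigma n ℓ ζ a (b + c) = sigma n ℓ ζ a b * sigma n ℓ ζ (a + b) c := by
  simp only [sigma_eq_zp_sigmaExp hz, ← zp_add hz, sigmaExp_cocycle]

theorem Top_single (a b : M n ℓ) (s : ℂ) :
    Top n ℓ ζ a (Finsupp.single b s) = sigma n ℓ ζ a b • Finsupp.single (a + b) s := by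
  simp [Top]

theorem Top_mul [NeZero ℓ] (hz : ζ ^ ℓ = 1) (a b : M n ℓ) :
    Top n ℓ ζ a * Top n ℓ ζ b = sigma n ℓ ζ a b • Top n ℓ ζ (a + b) := by
  refine Finsupp.lhom_ext fun c s => ?_
  rw [Module.End.mul_apply, Top_single, map_smul, Top_single, LinearMap.smul_apply, Top_single,
    smul_smul, smul_smul, sigma_cocycle hz, add_assoc]

theorem sigma_of_snd_eq_zero (p : Fin n → ℤ) (b : M n ℓ) : sigma n ℓ ζ (p, 0) b = 1 := by
  simp [sigma, chi]

theorem Top_zero : Top n ℓ ζ (0 : M n ℓ) = 1 :=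
  Finsupp.lhom_ext fun c s => by
    rw [Top_single, show (0 : M n ℓ) = (0, 0) from rfl, sigma_of_snd_eq_zero, one_smul,
      Prod.mk_zero_zero, zero_add]
    rfl

theorem Top_pow_of_snd_eq_zero [NeZero ℓ] (hz : ζ ^ ℓ = 1) (p : Fin n → ℤ) (m : ℕ) :
    Top n ℓ ζ (p, 0) ^ m = Top n ℓ ζ (m • p, 0) := by
  induction m with
  | zero => rw [pow_zero, zero_nsmul, Prod.mk_zero_zero, Top_zero]
  | succ m ih =>
    rw [pow_succ, ih, Top_mul hz, sigma_of_snd_eq_zero, one_smul, Prod.mk_add_mk, add_zero,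
      succ_nsmul]

end CrossedProduct

section Generator

variable {n ℓ : ℕ} [NeZero n] {ζ : ℂ} {i : Fin n}

theorem chi_nsmul_gvec (i : Fin n) (m : ℕ) (q : Fin n → ℤ) :
    chi n ℓ ζ (m • gvec n ℓ i) q = zp ℓ ζ (m • ((q i : ZMod ℓ) - q (i + 1))) := by
  simp [chi, gvec, sub_mul, Finset.sum_sub_distrib, Pi.single_apply, smul_sub]

theorem pS_gvec (hi : (i : ℕ) < n - 1) {k : ℕ} (hk : k ≤ n - 1) :
    pS n ℓ (gvec n ℓ i) k = if k = (i : ℕ) + 1 then 1 else 0 := by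
  rw [pS, gvec]
  simp only [Pi.sub_apply, Finset.sum_sub_distrib, Fin.sum_range_single_ofNat _ (by omega : k ≤ n),
    Fin.val_add_one_of_lt' (by omega : (i : ℕ) + 1 < n)]
  split_ifs <;> first | omega | simp

theorem coc_nsmul_gvec (hi : (i : ℕ) < n - 1) (m : ℕ) :
    coc n ℓ ζ (m • gvec n ℓ i) (gvec n ℓ i) = 1 := by
  rw [coc, Finset.sum_eq_zero, neg_zero, zp_zero]
  intro k hk
  rw [Finset.mem_Icc] at hk
  rw [pS_nsmul, pS_gvec hi (by omega), pS_gvec hi (by omega)]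
  split_ifs <;> first | omega | simp

theorem chi_gvec (i : Fin n) (q : Fin n → ℤ) :
    chi n ℓ ζ (gvec n ℓ i) q = zp ℓ ζ ((q i : ZMod ℓ) - q (i + 1)) := by
  simpa only [one_smul] using chi_nsmul_gvec (ℓ := ℓ) (ζ := ζ) i 1 q

/-- `y_i⁻¹ y_{i+1}⁻¹ g_i`, so that `Θ(x_i) = y_i (1 - c • zgen i)` with `c = ζ t_i / (ζ - 1)`. -/
def zgen (n ℓ : ℕ) [NeZero n] (ζ : ℂ) (i : Fin n) : A n ℓ :=
  Top n ℓ ζ (-Pi.single i 1 - Pi.single (i + 1) 1, gelt n ℓ i)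

variable [NeZero ℓ] (hz : ζ ^ ℓ = 1)
include hz

theorem Ygen_mul_zgen (i : Fin n) :
    Ygen n ℓ ζ i * zgen n ℓ ζ i = Yinv n ℓ ζ (i + 1) * Uy n ℓ ζ (gelt n ℓ i) := by
  rw [Ygen, zgen, Yinv, Uy, Top_mul hz, Top_mul hz, sigma_of_snd_eq_zero, sigma_of_snd_eq_zero,
    one_smul, one_smul, Prod.mk_add_mk, Prod.mk_add_mk, add_zero, zero_add]
  congr 2
  abel

theorem zgen_mul_Ygen (hℓ : 2 ≤ ℓ) (hi : (i : ℕ) < n - 1) :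
    zgen n ℓ ζ i * Ygen n ℓ ζ i = ζ • (Ygen n ℓ ζ i * zgen n ℓ ζ i) := by
  have hσ :
      sigma n ℓ ζ (-Pi.single i 1 - Pi.single (i + 1) 1, gelt n ℓ i) (Pi.single i 1, 0) = ζ := by
    simp [sigma, gelt, chi_gvec, Fin.add_one_ne_self_of_lt_sub_one hi, zp_one hℓ]
  rw [zgen, Ygen, Top_mul hz, Top_mul hz, hσ, sigma_of_snd_eq_zero, one_smul, add_comm]

theorem zgen_pow (hi : (i : ℕ) < n - 1) (m : ℕ) :
    zgen n ℓ ζ i ^ m =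
      Top n ℓ ζ (m • (-Pi.single i 1 - Pi.single (i + 1) 1), m • gelt n ℓ i) := by
  induction m with
  | zero => rw [pow_zero, zero_nsmul, zero_nsmul, Prod.mk_zero_zero, Top_zero]
  | succ m ih =>
    have hσ : sigma n ℓ ζ (m • (-Pi.single i 1 - Pi.single (i + 1) 1), m • gelt n ℓ i)
        (-Pi.single i 1 - Pi.single (i + 1) 1, gelt n ℓ i) = 1 := by
      simp only [sigma, gelt, AddSubgroup.coe_nsmul, coc_nsmul_gvec hi, chi_nsmul_gvec, one_mul]
      simp [Fin.add_one_ne_self_of_lt_sub_one hi]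
    rw [pow_succ, ih, zgen, Top_mul hz, hσ, one_smul, Prod.mk_add_mk, succ_nsmul, succ_nsmul]

theorem Ygen_pow_mul_zgen_pow (hi : (i : ℕ) < n - 1) :
    Ygen n ℓ ζ i ^ ℓ * zgen n ℓ ζ i ^ ℓ = Yinv n ℓ ζ (i + 1) ^ ℓ := by
  have hg : ℓ • gelt n ℓ i = 0 := by
    ext j
    simp [nsmul_eq_mul]
  rw [Ygen, Yinv, zgen_pow hz hi, hg, Top_pow_of_snd_eq_zero hz, Top_pow_of_snd_eq_zero hz,
    Top_mul hz, sigma_of_snd_eq_zero, one_smul, Prod.mk_add_mk, add_zero, ← nsmul_add]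
  congr 3
  abel

end Generator

end TGHA

open TGHA in
theorem statement5_general (n ℓ : ℕ) [NeZero n] (hℓ : 2 ≤ ℓ)
    (ζ : ℂ) (hζ : IsPrimitiveRoot ζ ℓ) (t : Fin n → ℂ)
    (Θ : H n ℓ ζ t →ₐ[ℂ] A n ℓ)
    (hΘx : ∀ i : Fin n,
      Θ (xx n ℓ ζ t i) =
        Ygen n ℓ ζ i -
          (ζ * t i / (ζ - 1)) • (Yinv n ℓ ζ (i + 1) * Uy n ℓ ζ (gelt n ℓ i))) :
    ∀ i : Fin n, (i : ℕ) < n - 1 →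
      Θ (xx n ℓ ζ t i ^ ℓ) =
        Ygen n ℓ ζ i ^ ℓ - (t i / (ζ - 1)) ^ ℓ • Yinv n ℓ ζ (i + 1) ^ ℓ := by
  intro i hi
  have : NeZero ℓ := ⟨by omega⟩
  have hz : ζ ^ ℓ = 1 := hζ.pow_eq_one
  have hc : (ζ * t i / (ζ - 1)) ^ ℓ = (t i / (ζ - 1)) ^ ℓ := by
    rw [mul_div_assoc, mul_pow, hz, one_mul]
  set c := ζ * t i / (ζ - 1)
  have hx : Θ (xx n ℓ ζ t i) = Ygen n ℓ ζ i * (1 - c • zgen n ℓ ζ i) := by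
    rw [hΘx, mul_sub (Ygen n ℓ ζ i), mul_one, mul_smul_comm, Ygen_mul_zgen hz]
  calc Θ (xx n ℓ ζ t i ^ ℓ) = (Ygen n ℓ ζ i * (1 - c • zgen n ℓ ζ i)) ^ ℓ := by rw [map_pow, hx]
    _ = Ygen n ℓ ζ i ^ ℓ - c ^ ℓ • (Ygen n ℓ ζ i ^ ℓ * zgen n ℓ ζ i ^ ℓ) :=
      mul_one_sub_smul_pow_of_isPrimitiveRoot (R := A n ℓ) (zgen_mul_Ygen hz hℓ hi) hζ (by omega) c
    _ = _ := by rw [Ygen_pow_mul_zgen_pow hz hi, hc]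

open TGHA in
/-- For every `i ∈ {1,…,n-1}` one has
`Θ(x_i^ℓ) = y_i^ℓ - τ_i^ℓ y_{i+1}^{-ℓ}` (with `τ_i = t_i/(ζ-1)`). -/
theorem statement5 (n ℓ : ℕ) [NeZero n] (hn : 3 ≤ n) (hℓ : 2 ≤ ℓ)
    (ζ : ℂ) (hζ : IsPrimitiveRoot ζ ℓ) (t : Fin n → ℂ)
    (Θ : H n ℓ ζ t →ₐ[ℂ] A n ℓ)
    (hΘx : ∀ i : Fin n,
      Θ (xx n ℓ ζ t i) =
        Ygen n ℓ ζ i -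
          (ζ * t i / (ζ - 1)) • (Yinv n ℓ ζ (i + 1) * Uy n ℓ ζ (gelt n ℓ i)))
    (hΘg : ∀ i : Fin n, Θ (ug n ℓ ζ t (gelt n ℓ i)) = Uy n ℓ ζ (gelt n ℓ i)) :
    ∀ i : Fin n, (i : ℕ) < n - 1 →
      Θ (xx n ℓ ζ t i ^ ℓ) =
        Ygen n ℓ ζ i ^ ℓ - (t i / (ζ - 1)) ^ ℓ • Yinv n ℓ ζ (i + 1) ^ ℓ :=
  statement5_general n ℓ hℓ ζ hζ t Θ hΘx
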